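/- arXiv:1206.1152 — 2 statements merged into one kernel-verified Lean document; each statement's English description precedes it below -/
import Mathlib

section
/- (Theorem 2) Let [n_1,…,n_s] and [ñ_1,…,ñ_{s̃}] be finite multisets of integers ≥ 2, each containing the element 2 at most once. Then χ_{[n_1,…,n_s]} = χ_{[ñ_1,…,ñ_{s̃}]} in ℤ[X] if and only if the multisets [n_1,…,n_s] and [ñ_1,…,ñ_{s̃}] coincide. -/
open Matrix Polynomial

/-- The Coxeter matrix `Φ_[n]` of the linearly oriented quiver of type `A_{n-1}`:
the `(n-1) × (n-1)` integer matrix whose `(i,j)`-entry is `1` if `j = i + 1`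
(for rows other than the last), whose last row has all entries `-1`, and whose
other entries are `0`. -/
def PhiA (n : ℕ) : Matrix (Fin (n - 1)) (Fin (n - 1)) ℤ :=
  fun i j =>
    if (i : ℕ) = n - 2 then -1
    else if (j : ℕ) = (i : ℕ) + 1 then 1 else 0

/-- The Kronecker (tensor) product `Φ_{[n_1,…,n_s]} = Φ_{[n_1]} ⊗ ⋯ ⊗ Φ_{[n_s]}`,
realized on the index type `Π i, Fin (n i - 1)`. -/
def PhiProd {s : ℕ} (n : Fin s → ℕ) :
    Matrix ((i : Fin s) → Fin (n i - 1)) ((i : Fin s) → Fin (n i - 1)) ℤ :=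
  fun x y => ∏ i, PhiA (n i) (x i) (y i)

/-- The characteristic polynomial `χ_{[n_1,…,n_s]} ∈ ℤ[X]` of `Φ_{[n_1,…,n_s]}`. -/
noncomputable def Chi {s : ℕ} (n : Fin s → ℕ) : Polynomial ℤ :=
  (PhiProd n).charpoly

/-- The standard primitive complex `m`-th root of unity `exp(2π√-1/m)`. -/
noncomputable def zeta (m : ℕ) : ℂ := Complex.exp (2 * Real.pi * Complex.I / m)

/-!
Over `ℂ`, `Φ_[n]` is diagonalised by the Vandermonde matrix of its eigenvalues `ζ_n ^ j`,
`0 < j < n`, so `Φ_{[n_1,…,n_s]}` is diagonalised by the Kronecker product of these Vandermonde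
matrices and its eigenvalues are the products `∏ i, ζ_{n_i} ^ j_i`. Hence `χ` determines their
power sums, and the `k`-th one factors as
`∏ i, ∑ j, ζ_{n_i} ^ (j k) = (-1) ^ s ∏_{n_i ∣ k} (1 - n_i)`.
These values for all `k` recover the multiplicity of every `d` by strong induction on `d`: at
`k = d` the factors with `n_i < d` are already known, and what remains is `(1 - d) ^ mult(d)`.
For `d ≥ 3` this pins down the multiplicity; for `d = 2` only its parity, which is why `2` may
occur at most once. Conversely, permuting the weights conjugates `Φ` by a permutation matrix.
-/

open Finset

def divisorProd (S : Multiset ℕ) (k : ℕ) : ℤ :=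
  (S.map fun a => if a ∣ k then 1 - (a : ℤ) else 1).prod

lemma divisorProd_add (S T : Multiset ℕ) (k : ℕ) :
    divisorProd (S + T) k = divisorProd S k * divisorProd T k := by
  simp only [divisorProd, Multiset.map_add, Multiset.prod_add]

lemma divisorProd_ne_zero {S : Multiset ℕ} (hS : ∀ a ∈ S, a ≠ 1) (k : ℕ) :
    divisorProd S k ≠ 0 := by
  refine Multiset.prod_ne_zero fun h0 => ?_
  obtain ⟨a, ha, hzero⟩ := Multiset.mem_map.1 h0
  split_ifs at hzero
  exacts [hS a ha (by omega), one_ne_zero hzero]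

lemma divisorProd_of_forall_le {S : Multiset ℕ} {d : ℕ} (hd : 0 < d)
    (hS : ∀ a ∈ S, d ≤ a) :
    divisorProd S d = (1 - d : ℤ) ^ S.count d := by
  rw [divisorProd, Multiset.prod_map_eq_pow_single d, if_pos dvd_rfl]
  intro a had ha
  rw [if_neg fun hdvd => had (le_antisymm (Nat.le_of_dvd hd hdvd) (hS a ha))]

lemma divisorProd_one {S : Multiset ℕ} (hS : ∀ a ∈ S, 2 ≤ a) : divisorProd S 1 = 1 := by
  refine Multiset.prod_eq_one fun x hx => ?_
  obtain ⟨a, ha, rfl⟩ := Multiset.mem_map.1 hx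
  rw [if_neg fun h => by have := hS a ha; have := Nat.le_of_dvd one_pos h; omega]

theorem eq_of_divisorProd_eq {S T : Multiset ℕ} (hS : ∀ a ∈ S, 2 ≤ a)
    (hT : ∀ a ∈ T, 2 ≤ a) (h2S : S.count 2 ≤ 1) (h2T : T.count 2 ≤ 1)
    (h : ∀ k, divisorProd S k = divisorProd T k) :
    S = T := by
  refine Multiset.ext.2 fun d => ?_
  induction d using Nat.strong_induction_on with
  | _ d ih =>
  by_cases hd : d < 2
  · rw [Multiset.count_eq_zero.2 fun h => by have := hS d h; omega,
      Multiset.count_eq_zero.2 fun h => by have := hT d h; omega]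
  have hlow : S.filter (· < d) = T.filter (· < d) := by
    ext e
    simp only [Multiset.count_filter]
    split_ifs with he
    exacts [ih e he, rfl]
  -- Only the elements `a < d` and the copies of `d` itself can divide `d`.
  have hsplit : ∀ U : Multiset ℕ, divisorProd U d =
      divisorProd (U.filter (· < d)) d * (1 - d : ℤ) ^ U.count d := by
    intro U
    have hhigh : ∀ a ∈ U.filter fun a => ¬ a < d, d ≤ a := fun a ha =>
      not_lt.1 (Multiset.of_mem_filter (p := fun a => ¬ a < d) ha)
    conv_lhs => rw [← Multiset.filter_add_not (· < d) U]
    rw [divisorProd_add, divisorProd_of_forall_le (by omega) hhigh,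
      Multiset.count_filter_of_pos (p := fun a => ¬ a < d) (lt_irrefl d)]
  have hpow : (1 - d : ℤ) ^ S.count d = (1 - d : ℤ) ^ T.count d := by
    have := h d
    rw [hsplit S, hsplit T, hlow] at this
    exact mul_left_cancel₀ (divisorProd_ne_zero (fun a ha => by
      have := hT a (Multiset.mem_of_mem_filter ha); omega) d) this
  rcases (show d = 2 ∨ 3 ≤ d by omega) with rfl | hd3
  · -- `1 - 2 = -1`, so only the parity of the multiplicity of `2` is visible.
    norm_num at hpow
    interval_cases hs : S.count 2 <;> interval_cases ht : T.count 2 <;> simp_all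
  · exact Int.pow_right_injective (by omega) hpow

namespace Matrix

section piKronecker

variable {ι R : Type*} [Fintype ι] [CommSemiring R] {κ μ ν : ι → Type*}

def piKronecker (A : ∀ i, Matrix (κ i) (μ i) R) : Matrix (∀ i, κ i) (∀ i, μ i) R :=
  of fun x y => ∏ i, A i (x i) (y i)

@[simp]
lemma piKronecker_apply (A : ∀ i, Matrix (κ i) (μ i) R) (x : ∀ i, κ i) (y : ∀ i, μ i) :
    piKronecker A x y = ∏ i, A i (x i) (y i) :=
  rfl

lemma piKronecker_mul [DecidableEq ι] [∀ i, Fintype (μ i)] (A : ∀ i, Matrix (κ i) (μ i) R)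
    (B : ∀ i, Matrix (μ i) (ν i) R) :
    piKronecker A * piKronecker B = piKronecker fun i => A i * B i := by
  ext x y
  simp only [mul_apply, piKronecker_apply, ← Finset.prod_mul_distrib]
  exact (Fintype.prod_sum fun i c => A i (x i) c * B i c (y i)).symm

lemma piKronecker_diagonal [∀ i, DecidableEq (κ i)] (d : ∀ i, κ i → R) :
    piKronecker (fun i => diagonal (d i)) = diagonal fun x => ∏ i, d i (x i) := by
  ext x y
  by_cases h : x = y
  · subst h; simp
  · obtain ⟨i, hi⟩ := Function.ne_iff.1 h
    rw [diagonal_apply_ne _ h, piKronecker_apply]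
    exact Finset.prod_eq_zero (Finset.mem_univ i) (diagonal_apply_ne _ hi)

lemma piKronecker_one [∀ i, DecidableEq (κ i)] :
    piKronecker (fun i => (1 : Matrix (κ i) (κ i) R)) = 1 := by
  simpa using piKronecker_diagonal (R := R) fun i (_ : κ i) => 1

lemma isUnit_piKronecker [DecidableEq ι] [∀ i, Fintype (κ i)] [∀ i, DecidableEq (κ i)]
    {A : ∀ i, Matrix (κ i) (κ i) R} (hA : ∀ i, IsUnit (A i)) : IsUnit (piKronecker A) := by
  choose u hu using hA
  refine ⟨⟨piKronecker fun i => u i, piKronecker fun i => ↑(u i)⁻¹, ?_, ?_⟩, ?_⟩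
  · simp [piKronecker_mul, piKronecker_one]
  · simp [piKronecker_mul, piKronecker_one]
  · exact congrArg piKronecker (funext hu)

lemma map_piKronecker {S : Type*} [CommSemiring S] (f : R →+* S)
    (A : ∀ i, Matrix (κ i) (μ i) R) :
    (piKronecker A).map f = piKronecker fun i => (A i).map f := by
  ext x y
  simp

lemma reindex_piKronecker_comp {ι' : Type*} [Fintype ι'] (e : ι ≃ ι') {κ μ : ι' → Type*}
    (A : ∀ j, Matrix (κ j) (μ j) R) :
    reindex (e.piCongrLeft κ) (e.piCongrLeft μ) (piKronecker fun i => A (e i)) =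
      piKronecker A := by
  ext x y
  simp only [reindex_apply, submatrix_apply, piKronecker_apply]
  rw [← e.prod_comp]
  simp [Equiv.piCongrLeft_symm_apply]

end piKronecker

lemma charpoly_eq_prod_of_mul_eq_mul_diagonal {R n : Type*} [CommRing R] [Fintype n]
    [DecidableEq n] {A P : Matrix n n R} (hP : IsUnit P) {d : n → R}
    (h : A * P = P * diagonal d) : A.charpoly = ∏ i, (X - C (d i)) := by
  obtain ⟨u, rfl⟩ := hP
  have hA : A = u.val * diagonal d * u.val⁻¹ := by
    rw [← h, ← coe_units_inv, mul_assoc, Units.mul_inv, mul_one]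
  rw [hA, charpoly_units_conj, charpoly_diagonal]

end Matrix

lemma geom_sum_eq_zero_of_pow_eq_one {K : Type*} [DivisionRing K] {x : K} {n : ℕ}
    (hx : x ≠ 1) (hxn : x ^ n = 1) : ∑ i ∈ range n, x ^ i = 0 := by
  rw [geom_sum_eq hx, hxn, sub_self, zero_div]

lemma isPrimitiveRoot_zeta {n : ℕ} (hn : n ≠ 0) : IsPrimitiveRoot (zeta n) n :=
  Complex.isPrimitiveRoot_exp n hn

/-- The eigenvalues of `Φ_[n]`: the `n`-th roots of unity other than `1`. -/
noncomputable def phiEigenvalue (n : ℕ) (j : Fin (n - 1)) : ℂ :=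
  zeta n ^ ((j : ℕ) + 1)

section phiEigenvalue

variable {n : ℕ}

lemma phiEigenvalue_pow_self (j : Fin (n - 1)) : phiEigenvalue n j ^ n = 1 := by
  have := j.isLt
  rw [phiEigenvalue, ← pow_mul, mul_comm, pow_mul, (isPrimitiveRoot_zeta (by omega)).pow_eq_one,
    one_pow]

lemma phiEigenvalue_ne_one (j : Fin (n - 1)) : phiEigenvalue n j ≠ 1 := by
  have := j.isLt
  rw [phiEigenvalue, Ne, (isPrimitiveRoot_zeta (by omega)).pow_eq_one_iff_dvd]
  exact fun hdvd => by have := Nat.le_of_dvd (Nat.succ_pos _) hdvd; omega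

lemma phiEigenvalue_injective : Function.Injective (phiEigenvalue n) := by
  intro j j' h
  have := j.isLt
  have := j'.isLt
  have := (isPrimitiveRoot_zeta (n := n) (by omega)).pow_inj (by omega) (by omega) h
  exact Fin.ext (by omega)

lemma PhiA_map_mul_vandermonde :
    (PhiA n).map (Int.cast : ℤ → ℂ) * (vandermonde (phiEigenvalue n))ᵀ =
      (vandermonde (phiEigenvalue n))ᵀ * diagonal (phiEigenvalue n) := by
  ext r j
  rw [mul_apply, mul_diagonal, transpose_apply, vandermonde_apply, ← pow_succ]
  by_cases hr : (r : ℕ) = n - 2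
  · have hgeom : ∑ i : Fin (n - 1), phiEigenvalue n j ^ (i : ℕ) +
        phiEigenvalue n j ^ (n - 1) = 0 := by
      rw [Fin.sum_univ_eq_sum_range (phiEigenvalue n j ^ ·), ← sum_range_succ,
        Nat.sub_add_cancel (by omega)]
      exact geom_sum_eq_zero_of_pow_eq_one (phiEigenvalue_ne_one j) (phiEigenvalue_pow_self j)
    simp only [PhiA, map_apply, hr, if_true, transpose_apply, vandermonde_apply]
    rw [show n - 2 + 1 = n - 1 by omega]
    push_cast
    simp only [neg_one_mul, sum_neg_distrib]
    linear_combination -hgeom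
  · have hlt : (r : ℕ) + 1 < n - 1 := by omega
    rw [sum_eq_single ⟨(r : ℕ) + 1, hlt⟩]
    · simp [PhiA, hr]
    · intro l _ hl
      have : (l : ℕ) ≠ r + 1 := fun h => hl (Fin.ext h)
      simp [PhiA, hr, this]
    · simp

lemma isUnit_vandermonde_phiEigenvalue : IsUnit (vandermonde (phiEigenvalue n))ᵀ := by
  rw [isUnit_iff_isUnit_det, det_transpose, isUnit_iff_ne_zero]
  exact det_vandermonde_ne_zero_iff.2 phiEigenvalue_injective

lemma sum_phiEigenvalue_pow (hn : n ≠ 0) (k : ℕ) :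
    ∑ j, phiEigenvalue n j ^ k = -((if n ∣ k then 1 - n else 1 : ℤ) : ℂ) := by
  set w := zeta n ^ k
  have hζ := isPrimitiveRoot_zeta hn
  have hsum : ∑ j, phiEigenvalue n j ^ k = ∑ i ∈ range (n - 1), w ^ (i + 1) := by
    rw [← Fin.sum_univ_eq_sum_range (fun i => w ^ (i + 1))]
    refine sum_congr rfl fun j _ => ?_
    rw [phiEigenvalue, ← pow_mul, ← pow_mul, mul_comm]
  have hgeom : ∑ i ∈ range n, w ^ i = ∑ i ∈ range (n - 1), w ^ (i + 1) + 1 := by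
    conv_lhs => rw [← Nat.sub_add_cancel (Nat.one_le_iff_ne_zero.2 hn)]
    rw [sum_range_succ', pow_zero]
  rw [hsum]
  by_cases hdvd : n ∣ k
  · have hw : w = 1 := hζ.pow_eq_one_iff_dvd k |>.2 hdvd
    simp [hw, hdvd, Nat.cast_sub (Nat.one_le_iff_ne_zero.2 hn)]
  · have hw : w ≠ 1 := mt (hζ.pow_eq_one_iff_dvd k).1 hdvd
    have hwn : w ^ n = 1 := by rw [← pow_mul, mul_comm, pow_mul, hζ.pow_eq_one, one_pow]
    rw [geom_sum_eq_zero_of_pow_eq_one hw hwn] at hgeom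
    rw [if_neg hdvd, Int.cast_one]
    linear_combination -hgeom

end phiEigenvalue

section Chi

variable {s : ℕ}

lemma PhiProd_eq_piKronecker (n : Fin s → ℕ) : PhiProd n = piKronecker fun i => PhiA (n i) :=
  rfl

noncomputable def chiRoots (n : Fin s → ℕ) : Multiset ℂ :=
  univ.val.map fun x : (∀ i, Fin (n i - 1)) => ∏ i, phiEigenvalue (n i) (x i)

lemma roots_map_Chi (n : Fin s → ℕ) :
    ((Chi n).map (Int.castRingHom ℂ)).roots = chiRoots n := by
  have hconj : (PhiProd n).map (Int.castRingHom ℂ) *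
      piKronecker (fun i => (vandermonde (phiEigenvalue (n i)))ᵀ) =
      piKronecker (fun i => (vandermonde (phiEigenvalue (n i)))ᵀ) *
        diagonal fun x => ∏ i, phiEigenvalue (n i) (x i) := by
    rw [PhiProd_eq_piKronecker, map_piKronecker, piKronecker_mul, ← piKronecker_diagonal,
      piKronecker_mul]
    exact congrArg piKronecker (funext fun i => PhiA_map_mul_vandermonde)
  rw [Chi, ← charpoly_map, charpoly_eq_prod_of_mul_eq_mul_diagonal
    (isUnit_piKronecker fun i => isUnit_vandermonde_phiEigenvalue) hconj, chiRoots,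
    ← roots_multiset_prod_X_sub_C (univ.val.map _), Multiset.map_map,
    Finset.prod_eq_multiset_prod]
  rfl

lemma prod_ofFn_eq_divisorProd (n : Fin s → ℕ) (k : ℕ) :
    ∏ i, (if n i ∣ k then 1 - (n i : ℤ) else 1) = divisorProd (List.ofFn n) k := by
  rw [divisorProd, Multiset.map_coe, Multiset.prod_coe, List.map_ofFn, List.prod_ofFn]
  rfl

lemma sum_chiRoots_pow {n : Fin s → ℕ} (hn : ∀ i, n i ≠ 0) (k : ℕ) :
    ((chiRoots n).map (· ^ k)).sum = (-1) ^ s * (divisorProd (List.ofFn n) k : ℂ) := by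
  rw [chiRoots, Multiset.map_map]
  change ∑ x : (∀ i, Fin (n i - 1)), (∏ i, phiEigenvalue (n i) (x i)) ^ k = _
  simp only [← Finset.prod_pow]
  rw [← Fintype.prod_sum fun i j => phiEigenvalue (n i) j ^ k]
  simp only [sum_phiEigenvalue_pow (hn _), Finset.prod_neg, card_univ, Fintype.card_fin]
  rw [← prod_ofFn_eq_divisorProd, Int.cast_prod]

lemma divisorProd_eq_of_Chi_eq {t : ℕ} {n : Fin s → ℕ} {m : Fin t → ℕ}
    (hn : ∀ i, 2 ≤ n i) (hm : ∀ i, 2 ≤ m i) (h : Chi n = Chi m) (k : ℕ) :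
    divisorProd (List.ofFn n) k = divisorProd (List.ofFn m) k := by
  have hroots : chiRoots n = chiRoots m := by rw [← roots_map_Chi, ← roots_map_Chi, h]
  have hsum : ∀ k, (-1) ^ s * divisorProd (List.ofFn n) k =
      (-1) ^ t * divisorProd (List.ofFn m) k := by
    intro k
    have := sum_chiRoots_pow (n := n) (fun i => by have := hn i; omega) k
    rw [hroots, sum_chiRoots_pow (n := m) (fun i => by have := hm i; omega)] at this
    exact_mod_cast this.symm
  have hsign : ((-1) ^ s : ℤ) = (-1) ^ t := by
    simpa [divisorProd_one (S := List.ofFn n) (by simpa using hn),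
      divisorProd_one (S := List.ofFn m) (by simpa using hm)] using hsum 1
  rw [hsign] at hsum
  exact mul_left_cancel₀ (pow_ne_zero _ (by norm_num)) (hsum k)

lemma Chi_comp_equiv {t : ℕ} (e : Fin s ≃ Fin t) (m : Fin t → ℕ) :
    Chi (m ∘ e) = Chi m := by
  rw [Chi, Chi, ← charpoly_reindex (e.piCongrLeft fun j => Fin (m j - 1)), PhiProd_eq_piKronecker,
    PhiProd_eq_piKronecker]
  exact congrArg charpoly (reindex_piKronecker_comp e fun j => PhiA (m j))

end Chi

lemma count_coe_ofFn {α : Type*} [DecidableEq α] {s : ℕ} (n : Fin s → α) (a : α) :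
    Multiset.count a (List.ofFn n) = #{i | n i = a} := by
  rw [← Fin.univ_val_map, Multiset.count_map, Finset.card, Finset.filter_val]
  exact congrArg _ (Multiset.filter_congr fun i _ => eq_comm)

lemma exists_equiv_comp_eq_of_coe_ofFn_eq {α : Type*} [DecidableEq α] {s t : ℕ}
    {n : Fin s → α} {m : Fin t → α} (h : (List.ofFn n : Multiset α) = List.ofFn m) :
    ∃ e : Fin s ≃ Fin t, m ∘ e = n := by
  have hfib : ∀ a, Fintype.card {i // n i = a} = Fintype.card {j // m j = a} := fun a => by
    rw [Fintype.card_subtype, Fintype.card_subtype, ← count_coe_ofFn, ← count_coe_ofFn, h]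
  exact ⟨Equiv.ofFiberEquiv fun a => Fintype.equivOfCardEq (hfib a),
    funext (Equiv.ofFiberEquiv_map _)⟩

theorem chi_eq_iff_multiset_eq {s t : ℕ} (n : Fin s → ℕ) (m : Fin t → ℕ)
    (hn : ∀ i, 2 ≤ n i) (hm : ∀ i, 2 ≤ m i)
    (h2n : (Finset.univ.filter (fun i => n i = 2)).card ≤ 1)
    (h2m : (Finset.univ.filter (fun i => m i = 2)).card ≤ 1) :
    Chi n = Chi m ↔ (↑(List.ofFn n) : Multiset ℕ) = (↑(List.ofFn m) : Multiset ℕ) := by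
  constructor
  · intro h
    rw [← count_coe_ofFn] at h2n h2m
    exact eq_of_divisorProd_eq (by simpa using hn) (by simpa using hm) h2n h2m
      (divisorProd_eq_of_Chi_eq hn hm h)
  · intro h
    obtain ⟨e, rfl⟩ := exists_equiv_comp_eq_of_coe_ofFn_eq h
    exact Chi_comp_equiv e m
end

section
/- (Theorem 4.3) Let [n_1,…,n_s] be a multiset of integers ≥ 2 containing the element 2 at most once. Then 1 is NOT an eigenvalue of Φ_{[n_1,…,n_s]} (equivalently, (X−1) does not divide χ_{[n_1,…,n_s]}) if and only if either (i) there exists an index i such that gcd(n_i, n_{i'}) = 1 for all i' ≠ i (i.e. the gcd graph has an isolated vertex), or (ii) lcm(n_1,…,n_s) is even and, writing E := {i : n_i is even}, the cardinality |E| is odd and at least 3, for every i ∈ E and every odd prime p dividing n_i there is no index i' ≠ i with p dividing n_{i'}, and at most one index i ∈ E has 2-adic valuation v_2(n_i) > 1. -/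
/-!
Over `ℂ`, `Φ_[n]` is diagonalised by a Vandermonde matrix: its eigenvalues are `ζ_n ^ k` for
`0 < k < n`. Hence the eigenvalues of the Kronecker product are the products `∏ ζ_{n_i} ^ k_i`, and
`1` is one of them iff some choice of `0 < k_i < n_i` makes `∑ k_i / n_i` an integer.

If `n_i` is coprime to all other `n_j`, multiplying the sum by `∏_{j ≠ i} n_j` forces `n_i ∣ k_i`.
Under (ii) the same trick shows that the odd part of every even `n_i` divides `k_i`; so all the even
terms but one are `1/2`, an even number of them, and the remaining one has a power of `2` as
denominator, which cannot cancel against the odd denominators.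

Conversely, a solution is assembled prime by prime. At an odd prime `p`, the indices `i` for which
`p` divides `n_i` and some other `n_j` (never exactly one index) receive fractions `γ_i / p` with
`p ∤ γ_i` summing to an integer. At `2`, halves, and two quarters when needed, go to a set of even
indices containing every index whose odd primes are private; when no index is isolated this is
possible unless (ii) holds. A sum of fractions with distinct prime-power denominators is integral
only if every summand is, so each `q_i = ∑_p c_{p,i}` is a non-integral multiple of `1 / n_i`, and
`k_i = n_i · fract q_i` works.
-/

open Matrix Polynomial

namespace Matrix

variable {ι R : Type*} [Fintype ι] {κ : ι → Type*}

def piKron [CommSemiring R] (A : ∀ i, Matrix (κ i) (κ i) R) :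
    Matrix (∀ i, κ i) (∀ i, κ i) R :=
  fun x y => ∏ i, A i (x i) (y i)

section CommSemiring

variable [CommSemiring R]

theorem piKron_mul [DecidableEq ι] [∀ i, Fintype (κ i)] (A B : ∀ i, Matrix (κ i) (κ i) R) :
    piKron A * piKron B = piKron fun i => A i * B i := by
  ext x y
  simp only [piKron, mul_apply, Finset.prod_univ_sum, Fintype.piFinset_univ,
    Finset.prod_mul_distrib]

theorem piKron_diagonal [∀ i, DecidableEq (κ i)] (d : ∀ i, κ i → R) :
    piKron (fun i => diagonal (d i)) = diagonal fun x => ∏ i, d i (x i) := by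
  ext x y
  by_cases h : x = y
  · simp [piKron, h]
  · obtain ⟨i, hi⟩ := Function.ne_iff.mp h
    rw [diagonal_apply_ne _ h]
    exact Finset.prod_eq_zero (Finset.mem_univ i) (diagonal_apply_ne _ hi)

theorem piKron_one [∀ i, DecidableEq (κ i)] :
    piKron (fun i => (1 : Matrix (κ i) (κ i) R)) = 1 := by
  simpa only [← diagonal_one, Finset.prod_const_one] using
    piKron_diagonal fun i (_ : κ i) => (1 : R)

theorem piKron_map {S : Type*} [CommSemiring S] (f : R →+* S) (A : ∀ i, Matrix (κ i) (κ i) R) :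
    (piKron A).map f = piKron fun i => (A i).map f := by
  ext x y
  simp [piKron, map_prod]

end CommSemiring

theorem charpoly_eq_of_mul_eq_mul {m : Type*} [Fintype m] [DecidableEq m] [CommRing R]
    {A D Q : Matrix m m R} (hQ : IsUnit Q) (h : A * Q = Q * D) : A.charpoly = D.charpoly := by
  have hQ' : IsUnit Q.det := (isUnit_iff_isUnit_det Q).mp hQ
  have : A = hQ.unit.val * D * hQ.unit.val⁻¹ := by
    rw [IsUnit.unit_spec, ← h, mul_nonsing_inv_cancel_right _ _ hQ']
  rw [this, charpoly_units_conj]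

end Matrix

theorem PhiA_map_mul_vandermonde_s17 {R : Type*} [CommRing R] {n : ℕ} (μ : Fin (n - 1) → R)
    (hμ : ∀ j, ∑ k ∈ Finset.range n, μ j ^ k = 0) :
    (PhiA n).map (Int.castRingHom R) * (vandermonde μ)ᵀ = (vandermonde μ)ᵀ * diagonal μ := by
  ext i j
  rw [mul_diagonal, transpose_apply, vandermonde_apply, ← pow_succ, mul_apply]
  by_cases hlast : (i : ℕ) = n - 2
  · have hsum := hμ j
    rw [show n = (n - 1) + 1 by omega, Finset.sum_range_succ, ← Fin.sum_univ_eq_sum_range] at hsum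
    simp only [map_apply, PhiA, hlast, if_true, transpose_apply, vandermonde_apply]
    rw [show n - 2 + 1 = n - 1 by omega]
    simpa [neg_mul, Finset.sum_neg_distrib, neg_eq_iff_add_eq_zero, add_comm] using hsum
  · rw [Finset.sum_eq_single ⟨i + 1, by omega⟩]
    · simp [PhiA, hlast]
    · intro k _ hk
      have : (k : ℕ) ≠ i + 1 := fun h => hk (Fin.ext h)
      simp [PhiA, hlast, this]
    · simp

section PrimitiveRoots

variable {K : Type*} [Field K] {n : ℕ} {ζ : K}

theorem IsPrimitiveRoot.geom_sum_pow_eq_zero (hζ : IsPrimitiveRoot ζ n) {j : ℕ} (hj : 0 < j)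
    (hjn : j < n) : ∑ k ∈ Finset.range n, (ζ ^ j) ^ k = 0 := by
  have hne : ζ ^ j ≠ 1 := hζ.pow_ne_one_of_pos_of_lt hj.ne' hjn
  have h := mul_neg_geom_sum (ζ ^ j) n
  rw [← pow_mul, mul_comm j, pow_mul, hζ.pow_eq_one, one_pow, sub_self] at h
  exact (mul_eq_zero.mp h).resolve_left (sub_ne_zero.mpr hne.symm)

theorem IsPrimitiveRoot.isUnit_vandermonde_pow_succ (hζ : IsPrimitiveRoot ζ n) :
    IsUnit (vandermonde fun j : Fin (n - 1) => ζ ^ ((j : ℕ) + 1)) := by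
  rw [isUnit_iff_isUnit_det, isUnit_iff_ne_zero, det_vandermonde_ne_zero_iff]
  intro a b hab
  have := hζ.pow_inj (by omega) (by omega) hab
  exact Fin.ext (by omega)

theorem PhiA_map_mul_eq_diagonal (hζ : IsPrimitiveRoot ζ n) :
    (PhiA n).map (Int.castRingHom K) * (vandermonde fun j : Fin (n - 1) => ζ ^ ((j : ℕ) + 1))ᵀ =
      (vandermonde fun j : Fin (n - 1) => ζ ^ ((j : ℕ) + 1))ᵀ *
        diagonal fun j : Fin (n - 1) => ζ ^ ((j : ℕ) + 1) :=
  PhiA_map_mul_vandermonde_s17 _ fun j => hζ.geom_sum_pow_eq_zero (Nat.succ_pos _) (by omega)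

theorem Chi_map_eq_prod {s : ℕ} {n : Fin s → ℕ} {ζ : Fin s → K}
    (hζ : ∀ i, IsPrimitiveRoot (ζ i) (n i)) :
    (Chi n).map (Int.castRingHom K) =
      ∏ x : ∀ i, Fin (n i - 1), (X - C (∏ i, ζ i ^ ((x i : ℕ) + 1))) := by
  set V := fun i => (vandermonde fun j : Fin (n i - 1) => ζ i ^ ((j : ℕ) + 1))ᵀ
  have hV : piKron V * piKron (fun i => (V i)⁻¹) = 1 := by
    rw [piKron_mul, ← piKron_one]
    congr 1
    ext1 i
    exact mul_nonsing_inv _ (by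
      simpa [V, isUnit_iff_isUnit_det] using (hζ i).isUnit_vandermonde_pow_succ)
  rw [Chi, ← charpoly_map, show PhiProd n = piKron fun i => PhiA (n i) from rfl, piKron_map,
    charpoly_eq_of_mul_eq_mul (IsUnit.of_mul_eq_one _ hV)
      (by rw [piKron_mul, piKron_mul]; exact congrArg piKron (funext fun i =>
        PhiA_map_mul_eq_diagonal (hζ i))),
    piKron_diagonal, charpoly_diagonal]

end PrimitiveRoots

-- Integrality of `q : ℚ` is stated as `q ∈ (⊥ : Subring ℚ)`, so that closure under the ring
-- operations comes for free.
theorem Rat.mem_bot_iff_den_eq_one (q : ℚ) : q ∈ (⊥ : Subring ℚ) ↔ q.den = 1 := by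
  rw [Subring.mem_bot, Rat.den_eq_one_iff]
  exact ⟨fun ⟨m, hm⟩ => hm ▸ Rat.num_intCast m ▸ rfl, fun h => ⟨q.num, h⟩⟩

theorem Rat.natCast_div_mem_bot_iff {a b : ℕ} (hb : b ≠ 0) :
    (a : ℚ) / b ∈ (⊥ : Subring ℚ) ↔ b ∣ a := by
  rw [mem_bot_iff_den_eq_one, den_div_natCast_eq_one_iff a b hb]

theorem Rat.intCast_div_mem_bot_iff {a b : ℤ} (hb : b ≠ 0) :
    (a : ℚ) / b ∈ (⊥ : Subring ℚ) ↔ b ∣ a := by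
  rw [mem_bot_iff_den_eq_one, den_div_intCast_eq_one_iff a b hb]

theorem Rat.mul_div_mem_bot_of_dvd {a b c : ℕ} (h : b ∣ c) :
    (c : ℚ) * (a / b) ∈ (⊥ : Subring ℚ) := by
  obtain ⟨d, rfl⟩ := h
  rcases eq_or_ne b 0 with rfl | hb
  · simp
  · rw [show ((b * d : ℕ) : ℚ) * (a / b) = d * a by push_cast; field_simp]
    exact mul_mem (natCast_mem _ d) (natCast_mem _ a)

theorem Rat.natCast_mul_mem_bot_of_dvd {a b : ℕ} {q : ℚ} (h : a ∣ b)
    (hq : (a : ℚ) * q ∈ (⊥ : Subring ℚ)) : (b : ℚ) * q ∈ (⊥ : Subring ℚ) := by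
  obtain ⟨c, rfl⟩ := h
  rw [Nat.cast_mul, mul_comm (a : ℚ), mul_assoc]
  exact mul_mem (natCast_mem _ c) hq

theorem Rat.ordProj_mul_div_mem_bot {p a b : ℕ} (h : ordCompl[p] b ∣ a) :
    ((ordProj[p] b : ℕ) : ℚ) * (a / b) ∈ (⊥ : Subring ℚ) := by
  obtain ⟨t, rfl⟩ := h
  rcases eq_or_ne b 0 with rfl | hb
  · simp
  have hb' : (b : ℚ) = (ordProj[p] b : ℕ) * (ordCompl[p] b : ℕ) := by
    exact_mod_cast (Nat.ordProj_mul_ordCompl_eq_self b p).symm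
  have hM : ((ordCompl[p] b : ℕ) : ℚ) ≠ 0 := by exact_mod_cast (Nat.ordCompl_pos p hb).ne'
  convert natCast_mem (⊥ : Subring ℚ) t using 1
  rw [hb', Nat.cast_mul]
  field_simp

theorem Rat.mem_bot_of_coprime {a b : ℕ} {q : ℚ} (hab : a.Coprime b)
    (ha : (a : ℚ) * q ∈ (⊥ : Subring ℚ)) (hb : (b : ℚ) * q ∈ (⊥ : Subring ℚ)) :
    q ∈ (⊥ : Subring ℚ) := by
  have hbezout : (1 : ℚ) = a * a.gcdA b + b * a.gcdB b := by
    exact_mod_cast (Nat.coprime_iff_gcd_eq_one.mp hab ▸ Nat.gcd_eq_gcd_ab a b)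
  rw [← one_mul q, hbezout, add_mul, mul_right_comm, mul_right_comm (b : ℚ)]
  exact add_mem (mul_mem ha (intCast_mem _ _)) (mul_mem hb (intCast_mem _ _))

theorem Rat.natCast_div_mem_Ioo {a b : ℕ} (ha : 0 < a) (hab : a < b) :
    (a : ℚ) / b ∈ Set.Ioo 0 1 := by
  have hb : (0 : ℚ) < b := by exact_mod_cast ha.trans hab
  exact ⟨div_pos (by exact_mod_cast ha) hb, (div_lt_one hb).mpr (by exact_mod_cast hab)⟩

theorem Rat.notMem_bot_of_mem_Ioo {q : ℚ} (hq : q ∈ Set.Ioo 0 1) : q ∉ (⊥ : Subring ℚ) := by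
  intro h
  obtain ⟨m, rfl⟩ := Subring.mem_bot.mp h
  have : (0 : ℤ) < m := by exact_mod_cast hq.1
  have : m < 1 := by exact_mod_cast hq.2
  omega

theorem Rat.eq_half_of_two_mul_mem_bot {q : ℚ} (h : 2 * q ∈ (⊥ : Subring ℚ))
    (hq : q ∈ Set.Ioo 0 1) : q = 1 / 2 := by
  obtain ⟨m, hm⟩ := Subring.mem_bot.mp h
  have : (0 : ℤ) < m := by exact_mod_cast (by linarith [hq.1] : (0 : ℚ) < m)
  have : m < 2 := by exact_mod_cast (by linarith [hq.2] : (m : ℚ) < 2)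
  obtain rfl : m = 1 := by omega
  rw [Int.cast_one] at hm
  linarith

theorem Rat.sum_notMem_bot_of_prime_pow_mul_mem_bot {P : Finset ℕ} (hP : ∀ p ∈ P, p.Prime)
    (e : ℕ → ℕ) {x : ℕ → ℚ} (hx : ∀ p ∈ P, ((p ^ e p : ℕ) : ℚ) * x p ∈ (⊥ : Subring ℚ))
    {p₀ : ℕ} (hp₀ : p₀ ∈ P) (hxp₀ : x p₀ ∉ (⊥ : Subring ℚ)) :
    ∑ p ∈ P, x p ∉ (⊥ : Subring ℚ) := by
  intro hsum
  set D := ∏ p ∈ P.erase p₀, p ^ e p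
  have hrest : (D : ℚ) * ∑ p ∈ P.erase p₀, x p ∈ (⊥ : Subring ℚ) := by
    rw [Finset.mul_sum]
    exact sum_mem fun p hp => natCast_mul_mem_bot_of_dvd
      (Finset.dvd_prod_of_mem (fun p => p ^ e p) hp) (hx p (Finset.mem_of_mem_erase hp))
  have hD : (D : ℚ) * x p₀ ∈ (⊥ : Subring ℚ) := by
    rw [← Finset.add_sum_erase _ _ hp₀] at hsum
    simpa [mul_add] using sub_mem (mul_mem (natCast_mem _ D) hsum) hrest
  have hcop : (p₀ ^ e p₀).Coprime D := Nat.Coprime.prod_right fun p hp =>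
    Nat.Coprime.pow _ _ ((Nat.coprime_primes (hP p₀ hp₀) (hP p (Finset.mem_of_mem_erase hp))).mpr
      (Finset.ne_of_mem_erase hp).symm)
  exact hxp₀ (mem_bot_of_coprime hcop (hx p₀ hp₀) hD)

def HasIntegralFractionSum {ι : Type*} [Fintype ι] (n : ι → ℕ) : Prop :=
  ∃ k : ι → ℕ, (∀ i, 0 < k i ∧ k i < n i) ∧ ∑ i, (k i : ℚ) / n i ∈ (⊥ : Subring ℚ)

section RootsOfUnity

open Complex Real

theorem Complex.exp_two_pi_I_mul_ratCast_eq_one_iff (q : ℚ) :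
    exp (2 * π * I * q) = 1 ↔ q ∈ (⊥ : Subring ℚ) := by
  have h2πI : 2 * π * I ≠ 0 := by simp [pi_ne_zero, I_ne_zero]
  rw [exp_eq_one_iff, Subring.mem_bot]
  refine exists_congr fun m => ?_
  rw [mul_comm, mul_left_inj' h2πI, eq_comm]
  exact_mod_cast Iff.rfl

theorem zeta_pow (m k : ℕ) : zeta m ^ k = exp (2 * π * I * ((k / m : ℚ) : ℂ)) := by
  rw [zeta, ← Complex.exp_nat_mul]
  push_cast
  ring_nf

theorem prod_zeta_pow_eq_one_iff {ι : Type*} [Fintype ι] (n k : ι → ℕ) :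
    ∏ i, zeta (n i) ^ k i = 1 ↔ ∑ i, (k i : ℚ) / n i ∈ (⊥ : Subring ℚ) := by
  rw [← exp_two_pi_I_mul_ratCast_eq_one_iff, Rat.cast_sum, Finset.mul_sum, Complex.exp_sum]
  simp only [zeta_pow]

end RootsOfUnity

theorem Chi_isRoot_one_iff {s : ℕ} {n : Fin s → ℕ} (hn : ∀ i, n i ≠ 0) :
    (Chi n).IsRoot 1 ↔ HasIntegralFractionSum n := by
  rw [← isRoot_map_iff (f := Int.castRingHom ℂ) Int.cast_injective, map_one,
    Chi_map_eq_prod (ζ := fun i => zeta (n i)) fun i => Complex.isPrimitiveRoot_exp _ (hn i),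
    isRoot_prod]
  simp only [Finset.mem_univ, true_and, root_X_sub_C]
  constructor
  · rintro ⟨x, hx⟩
    refine ⟨fun i => x i + 1, fun i => ⟨Nat.succ_pos _, Nat.add_lt_of_lt_sub (x i).isLt⟩, ?_⟩
    exact (prod_zeta_pow_eq_one_iff _ _).mp (by exact_mod_cast hx)
  · rintro ⟨k, hk, hsum⟩
    have hk' : ∀ i, k i - 1 + 1 = k i := fun i => Nat.sub_add_cancel (hk i).1
    refine ⟨fun i => ⟨k i - 1, by have := hk i; omega⟩, ?_⟩
    simpa only [hk'] using (prod_zeta_pow_eq_one_iff n k).mpr hsum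

def HasPrivateOddPrimes {ι : Type*} (n : ι → ℕ) (i : ι) : Prop :=
  ∀ p : ℕ, p.Prime → Odd p → p ∣ n i → ∀ i', i' ≠ i → ¬ p ∣ n i'

/-- Condition (ii) of the theorem. -/
def ParityObstruction {ι : Type*} [Fintype ι] (n : ι → ℕ) : Prop :=
  Even (Finset.univ.lcm n) ∧
    Odd (Finset.univ.filter (fun i => Even (n i))).card ∧
    3 ≤ (Finset.univ.filter (fun i => Even (n i))).card ∧
    (∀ i, Even (n i) → HasPrivateOddPrimes n i) ∧
    (Finset.univ.filter (fun i => Even (n i) ∧ 1 < padicValNat 2 (n i))).card ≤ 1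

section Obstructions

open Finset

variable {ι : Type*} [Fintype ι] [DecidableEq ι] {n k : ι → ℕ}

theorem prod_compl_mul_sum_mem_bot (h : ∑ j, (k j : ℚ) / n j ∈ (⊥ : Subring ℚ))
    (s : Finset ι) :
    ((∏ j ∈ sᶜ, n j : ℕ) : ℚ) * ∑ j ∈ s, (k j : ℚ) / n j ∈ (⊥ : Subring ℚ) := by
  have hcompl : ((∏ j ∈ sᶜ, n j : ℕ) : ℚ) * ∑ j ∈ sᶜ, (k j : ℚ) / n j ∈ (⊥ : Subring ℚ) := by
    rw [mul_sum]
    exact sum_mem fun j hj => Rat.mul_div_mem_bot_of_dvd (dvd_prod_of_mem n hj)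
  have := sub_mem (mul_mem (natCast_mem _ (∏ j ∈ sᶜ, n j)) h) hcompl
  rwa [← sum_add_sum_compl s, mul_add, add_sub_cancel_right] at this

theorem dvd_prod_erase_mul_of_sum_mem_bot (h : ∑ j, (k j : ℚ) / n j ∈ (⊥ : Subring ℚ)) {i : ι}
    (hi : n i ≠ 0) : n i ∣ (∏ j ∈ univ.erase i, n j) * k i := by
  have := prod_compl_mul_sum_mem_bot h {i}
  rw [compl_singleton, sum_singleton, ← mul_div_assoc] at this
  rw [← Rat.natCast_div_mem_bot_iff hi]
  exact_mod_cast this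

theorem not_hasIntegralFractionSum_of_isolated
    (h : ∃ i, ∀ i', i' ≠ i → Nat.gcd (n i) (n i') = 1) : ¬ HasIntegralFractionSum n := by
  rintro ⟨k, hk, hsum⟩
  obtain ⟨i, hi⟩ := h
  have hcop : (n i).Coprime (∏ j ∈ univ.erase i, n j) :=
    Nat.Coprime.prod_right fun j hj => hi j (ne_of_mem_erase hj)
  have hdvd := hcop.dvd_of_dvd_mul_left
    (dvd_prod_erase_mul_of_sum_mem_bot hsum (Nat.ne_zero_of_lt (hk i).2))
  exact absurd (Nat.le_of_dvd (hk i).1 hdvd) (hk i).2.not_ge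

theorem ordCompl_two_dvd_of_sum_mem_bot (h : ∑ j, (k j : ℚ) / n j ∈ (⊥ : Subring ℚ)) {i : ι}
    (hi : n i ≠ 0) (hpriv : HasPrivateOddPrimes n i) : ordCompl[2] (n i) ∣ k i := by
  have hcop : (ordCompl[2] (n i)).Coprime (∏ j ∈ univ.erase i, n j) := by
    refine Nat.Coprime.prod_right fun j hj => Nat.coprime_of_dvd fun p hp hpM => ?_
    have hp2 : p ≠ 2 := by
      rintro rfl
      exact hp.one_lt.ne' (Nat.Coprime.eq_one_of_dvd (Nat.coprime_ordCompl hp hi) hpM)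
    exact hpriv p hp (hp.odd_of_ne_two hp2) (hpM.trans (Nat.ordCompl_dvd _ _)) j
      (ne_of_mem_erase hj)
  exact hcop.dvd_of_dvd_mul_left
    ((Nat.ordCompl_dvd _ _).trans (dvd_prod_erase_mul_of_sum_mem_bot h hi))

theorem div_eq_half_of_factorization_two_eq_one (h : ∑ j, (k j : ℚ) / n j ∈ (⊥ : Subring ℚ))
    {i : ι} (hk : 0 < k i ∧ k i < n i) (hpriv : HasPrivateOddPrimes n i)
    (hv : (n i).factorization 2 = 1) : (k i : ℚ) / n i = 1 / 2 := by
  have := Rat.ordProj_mul_div_mem_bot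
    (ordCompl_two_dvd_of_sum_mem_bot h (Nat.ne_zero_of_lt hk.2) hpriv)
  rw [hv, pow_one, Nat.cast_two] at this
  exact Rat.eq_half_of_two_mul_mem_bot this (Rat.natCast_div_mem_Ioo hk.1 hk.2)

theorem not_hasIntegralFractionSum_of_parityObstruction (h : ParityObstruction n) :
    ¬ HasIntegralFractionSum n := by
  rintro ⟨k, hk, hsum⟩
  obtain ⟨-, ⟨c, hc⟩, -, hpriv, hval⟩ := h
  set E := univ.filter fun i => Even (n i)
  have hn0 : ∀ i, n i ≠ 0 := fun i => Nat.ne_zero_of_lt (hk i).2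
  have hprivE : ∀ i ∈ E, HasPrivateOddPrimes n i := fun i hi => hpriv i (mem_filter.mp hi).2
  obtain ⟨i₀, hi₀, hmax⟩ := E.exists_max_image (fun i => (n i).factorization 2)
    (card_pos.mp (by omega))
  -- `4` divides at most one even `n i`, and if so it divides `n i₀`
  have hhalf : ∀ i ∈ E.erase i₀, (k i : ℚ) / n i = 1 / 2 := by
    intro i hi
    obtain ⟨hne, hiE⟩ := mem_erase.mp hi
    refine div_eq_half_of_factorization_two_eq_one hsum (hk i) (hprivE i hiE) ?_
    have hpos := Nat.prime_two.factorization_pos_of_dvd (hn0 i)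
      (even_iff_two_dvd.mp (mem_filter.mp hiE).2)
    by_contra hne1
    have hmem : ∀ j ∈ E, 1 < (n j).factorization 2 →
        j ∈ univ.filter fun i => Even (n i) ∧ 1 < padicValNat 2 (n i) := fun j hj hj1 =>
      mem_filter.mpr ⟨mem_univ j, (mem_filter.mp hj).2,
        Nat.factorization_def (n j) Nat.prime_two ▸ hj1⟩
    exact hne (card_le_one.mp hval i (hmem i hiE (by omega)) i₀
      (hmem i₀ hi₀ (by have := hmax i hiE; omega)))
  have hEint : ∑ i ∈ E.erase i₀, (k i : ℚ) / n i ∈ (⊥ : Subring ℚ) := by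
    rw [sum_congr rfl hhalf, sum_const, card_erase_of_mem hi₀, hc, Nat.add_sub_cancel,
      nsmul_eq_mul]
    convert natCast_mem (⊥ : Subring ℚ) c using 1
    push_cast
    ring
  have hodd : ((∏ j ∈ Eᶜ, n j : ℕ) : ℚ) * ((k i₀ : ℚ) / n i₀) ∈ (⊥ : Subring ℚ) := by
    have := sub_mem (prod_compl_mul_sum_mem_bot hsum E)
      (mul_mem (natCast_mem _ (∏ j ∈ Eᶜ, n j)) hEint)
    rwa [← add_sum_erase _ _ hi₀, mul_add, add_sub_cancel_right] at this
  have hcop : (ordProj[2] (n i₀)).Coprime (∏ j ∈ Eᶜ, n j) :=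
    Nat.Coprime.pow_left _ (Nat.Coprime.prod_right fun j hj =>
      Nat.coprime_two_left.mpr (Nat.not_even_iff_odd.mp (by simpa [E] using hj)))
  exact Rat.notMem_bot_of_mem_Ioo (Rat.natCast_div_mem_Ioo (hk i₀).1 (hk i₀).2)
    (Rat.mem_bot_of_coprime hcop (Rat.ordProj_mul_div_mem_bot
      (ordCompl_two_dvd_of_sum_mem_bot hsum (hn0 i₀) (hprivE i₀ hi₀))) hodd)

end Obstructions

section Construction

open Finset

theorem exists_not_dvd_sum_eq_zero {ι : Type*} [DecidableEq ι] {p : ℕ} (hp : 3 ≤ p)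
    {S : Finset ι} (hS : #S ≠ 1) : ∃ γ : ι → ℤ, (∀ i ∈ S, ¬ (p : ℤ) ∣ γ i) ∧ ∑ i ∈ S, γ i = 0 := by
  rcases S.eq_empty_or_nonempty with rfl | ⟨x, hx⟩
  · exact ⟨0, by simp, by simp⟩
  obtain ⟨y, hy⟩ : (S.erase x).Nonempty := by
    rw [← card_pos, card_erase_of_mem hx]
    have := card_pos.mpr ⟨x, hx⟩
    omega
  obtain ⟨hyx, hyS⟩ := mem_erase.mp hy
  set m : ℤ := ((#S : ℕ) : ℤ)
  have hp' : (3 : ℤ) ≤ p := by exact_mod_cast hp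
  have hsmall : ∀ u : ℤ, 0 < u → u < 3 → ¬ (p : ℤ) ∣ u := fun u h0 h3 h =>
    absurd (Int.le_of_dvd h0 h) (by omega)
  -- at most one of the consecutive integers `m - 1`, `m` is divisible by `p`
  obtain ⟨u, hu0, hu3, hpu⟩ : ∃ u : ℤ, 0 < u ∧ u < 3 ∧ ¬ (p : ℤ) ∣ m - 2 + u := by
    by_cases h : (p : ℤ) ∣ m - 1
    · refine ⟨2, by norm_num, by norm_num, fun h' => hsmall 1 one_pos (by norm_num) ?_⟩
      have := dvd_sub h' h
      rwa [show m - 2 + 2 - (m - 1) = 1 by ring] at this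
    · exact ⟨1, one_pos, by norm_num, by rwa [show m - 2 + 1 = m - 1 by ring]⟩
  -- `γ` is `u` at `x`, `-(m - 2 + u)` at `y` and `1` elsewhere
  refine ⟨1 + Pi.single x (u - 1) + Pi.single y (1 - m - u), fun i _ => ?_, ?_⟩
  · by_cases hix : i = x
    · subst hix
      simpa [Pi.single_eq_of_ne hyx.symm] using hsmall u hu0 hu3
    by_cases hiy : i = y
    · subst hiy
      simp only [Pi.add_apply, Pi.one_apply, Pi.single_eq_of_ne hix, Pi.single_eq_same]
      rwa [show 1 + 0 + (1 - m - u) = -(m - 2 + u) by ring, dvd_neg]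
    · simpa [Pi.single_eq_of_ne hix, Pi.single_eq_of_ne hiy] using hsmall 1 one_pos (by norm_num)
  · simp only [Pi.add_apply, Pi.one_apply, sum_add_distrib, sum_pi_single', if_pos hx,
      if_pos hyS, sum_const, nsmul_one, m]
    ring

theorem two_dvd_of_hasPrivateOddPrimes {ι : Type*} {n : ι → ℕ} {i : ι}
    (hpriv : HasPrivateOddPrimes n i) {j : ι} (hji : j ≠ i) (hgcd : Nat.gcd (n i) (n j) ≠ 1) :
    2 ∣ n i ∧ 2 ∣ n j := by
  set p := (Nat.gcd (n i) (n j)).minFac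
  have hp : p.Prime := Nat.minFac_prime hgcd
  have hpi : p ∣ n i := (Nat.minFac_dvd _).trans (Nat.gcd_dvd_left _ _)
  have hpj : p ∣ n j := (Nat.minFac_dvd _).trans (Nat.gcd_dvd_right _ _)
  obtain h2 | hodd := hp.eq_two_or_odd'
  · exact h2 ▸ ⟨hpi, hpj⟩
  · exact absurd hpj (hpriv p hp hodd hpi j hji)

variable {ι : Type*} [Fintype ι] {n : ι → ℕ}

theorem hasIntegralFractionSum_of_forall_notMem_bot (hn : ∀ i, n i ≠ 0) {q : ι → ℚ}
    (hnq : ∀ i, (n i : ℚ) * q i ∈ (⊥ : Subring ℚ)) (hq : ∀ i, q i ∉ (⊥ : Subring ℚ))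
    (hsum : ∑ i, q i ∈ (⊥ : Subring ℚ)) : HasIntegralFractionSum n := by
  have hfract : ∀ i, (n i : ℚ) * Int.fract (q i) ∈ (⊥ : Subring ℚ) := fun i => by
    rw [Int.fract, mul_sub]
    exact sub_mem (hnq i) (mul_mem (natCast_mem _ _) (intCast_mem _ _))
  choose z hz using fun i => Subring.mem_bot.mp (hfract i)
  have hn' : ∀ i, (0 : ℚ) < n i := fun i => by exact_mod_cast Nat.pos_of_ne_zero (hn i)
  have hpos : ∀ i, 0 < Int.fract (q i) := fun i =>
    Int.fract_pos.mpr fun h => hq i (h ▸ intCast_mem _ _)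
  have hz0 : ∀ i, 0 < z i := fun i => by
    have := mul_pos (hn' i) (hpos i)
    rw [← hz] at this
    exact_mod_cast this
  have hzn : ∀ i, z i < n i := fun i => by
    have := mul_lt_of_lt_one_right (hn' i) (Int.fract_lt_one (q i))
    rw [← hz] at this
    exact_mod_cast this
  have hdiv : ∀ i, ((z i).toNat : ℚ) / n i = Int.fract (q i) := fun i => by
    rw [div_eq_iff (hn' i).ne', mul_comm, ← hz, ← Int.cast_natCast, Int.toNat_of_nonneg (hz0 i).le]
  refine ⟨fun i => (z i).toNat, fun i => ⟨Int.lt_toNat.mpr (hz0 i),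
    (Int.toNat_lt' (Nat.pos_of_ne_zero (hn i))).mpr (hzn i)⟩, ?_⟩
  simp only [hdiv, Int.fract, sum_sub_distrib]
  exact sub_mem hsum (sum_mem fun i _ => intCast_mem _ _)

/-- For `d` a power of a prime `p`, the `p`-part of a solution assembled prime by prime. -/
def IsLocalSolution (n : ι → ℕ) (d : ℕ) (c : ι → ℚ) : Prop :=
  (∀ i, (d : ℚ) * c i ∈ (⊥ : Subring ℚ)) ∧ (∀ i, (n i : ℚ) * c i ∈ (⊥ : Subring ℚ)) ∧
    ∑ i, c i ∈ (⊥ : Subring ℚ)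

theorem hasIntegralFractionSum_of_isLocalSolution (hn : ∀ i, n i ≠ 0) {P : Finset ℕ}
    (hP : ∀ p ∈ P, p.Prime) (e : ℕ → ℕ) {c : ℕ → ι → ℚ}
    (hc : ∀ p ∈ P, IsLocalSolution n (p ^ e p) (c p))
    (hcover : ∀ i, ∃ p ∈ P, c p i ∉ (⊥ : Subring ℚ)) : HasIntegralFractionSum n := by
  refine hasIntegralFractionSum_of_forall_notMem_bot hn (q := fun i => ∑ p ∈ P, c p i)
    (fun i => ?_) (fun i => ?_) ?_
  · rw [mul_sum]
    exact sum_mem fun p hp => (hc p hp).2.1 i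
  · obtain ⟨p₀, hp₀, hcp₀⟩ := hcover i
    exact Rat.sum_notMem_bot_of_prime_pow_mul_mem_bot hP e (fun p hp => (hc p hp).1 i) hp₀ hcp₀
  · rw [sum_comm]
    exact sum_mem fun p hp => (hc p hp).2.2

theorem exists_isLocalSolution_of_three_le [DecidableEq ι] {p : ℕ} (hp : 3 ≤ p)
    {S : Finset ι} (hS : #S ≠ 1) (hdvd : ∀ i ∈ S, p ∣ n i) :
    ∃ c, IsLocalSolution n p c ∧ ∀ i ∈ S, c i ∉ (⊥ : Subring ℚ) := by
  obtain ⟨γ, hγ, hγsum⟩ := exists_not_dvd_sum_eq_zero hp hS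
  have hp0 : (p : ℚ) ≠ 0 := by exact_mod_cast (by omega : p ≠ 0)
  refine ⟨fun i => if i ∈ S then (γ i : ℚ) / p else 0, ⟨fun i => ?_, fun i => ?_, ?_⟩,
    fun i hi => ?_⟩ <;> beta_reduce
  · split_ifs
    · rw [mul_div_cancel₀ _ hp0]
      exact intCast_mem _ _
    · simp
  · split_ifs with hi
    · obtain ⟨a, ha⟩ := hdvd i hi
      rw [ha, Nat.cast_mul, mul_comm (p : ℚ), mul_assoc, mul_div_cancel₀ _ hp0]
      exact mul_mem (natCast_mem _ _) (intCast_mem _ _)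
    · simp
  · rw [sum_ite_mem, univ_inter, ← sum_div, ← Int.cast_sum, hγsum]
    simp
  · rw [if_pos hi, ← Int.cast_natCast p, Rat.intCast_div_mem_bot_iff (by omega)]
    exact hγ i hi

theorem exists_isLocalSolution_four [DecidableEq ι] {T H : Finset ι} (hHT : H ⊆ T)
    (hT : ∀ i ∈ T, 2 ∣ n i) (hH : ∀ i ∈ H, 4 ∣ n i) (hcard : 4 ∣ 2 * #T - #H) :
    ∃ c, IsLocalSolution n 4 c ∧ ∀ i ∈ T, c i ∉ (⊥ : Subring ℚ) := by
  refine ⟨fun i => (if i ∈ T then 1 / 2 else 0) - (if i ∈ H then 1 / 4 else 0),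
    ⟨fun i => ?_, fun i => ?_, ?_⟩, fun i hi => ?_⟩ <;> beta_reduce
  · split_ifs
    · exact Subring.mem_bot.mpr ⟨1, by norm_num⟩
    · exact Subring.mem_bot.mpr ⟨2, by norm_num⟩
    · exact Subring.mem_bot.mpr ⟨-1, by norm_num⟩
    · simp
  · split_ifs with h2 h4 h4
    · obtain ⟨a, ha⟩ := hH i h4
      exact Subring.mem_bot.mpr ⟨a, by rw [ha]; push_cast; ring⟩
    · obtain ⟨a, ha⟩ := hT i h2
      exact Subring.mem_bot.mpr ⟨a, by rw [ha]; push_cast; ring⟩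
    · exact absurd (hHT h4) h2
    · simp
  · obtain ⟨a, ha⟩ := hcard
    have ha' : (2 * #T : ℚ) - #H = 4 * a := by
      rw [← Nat.cast_ofNat, ← Nat.cast_mul, ← Nat.cast_sub (by grind [card_le_card hHT])]
      exact_mod_cast ha
    refine Subring.mem_bot.mpr ⟨a, ?_⟩
    rw [sum_sub_distrib, sum_ite_mem, sum_ite_mem, univ_inter, univ_inter, sum_const, sum_const,
      nsmul_eq_mul, nsmul_eq_mul]
    push_cast
    linarith
  · rw [if_pos hi]
    split_ifs <;> exact Rat.notMem_bot_of_mem_Ioo (by norm_num)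

theorem one_lt_card_filter_padicValNat (hpar : ¬ ParityObstruction n)
    (hpriv : ∀ i, Even (n i) → HasPrivateOddPrimes n i)
    (hodd : Odd #(univ.filter fun i => Even (n i))) (hE : 1 < #(univ.filter fun i => Even (n i))) :
    1 < #(univ.filter fun i => Even (n i) ∧ 1 < padicValNat 2 (n i)) := by
  obtain ⟨x, hx⟩ := card_pos.mp (by omega : 0 < #(univ.filter fun i => Even (n i)))
  have hE3 : 3 ≤ #(univ.filter fun i => Even (n i)) := by
    obtain ⟨c, hc⟩ := hodd
    omega
  by_contra h
  exact hpar ⟨even_iff_two_dvd.mpr ((even_iff_two_dvd.mp (mem_filter.mp hx).2).trans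
    (dvd_lcm (mem_univ x))), hodd, hE3, hpriv, by omega⟩

theorem exists_two_cover (hiso : ¬ ∃ i, ∀ i', i' ≠ i → Nat.gcd (n i) (n i') = 1)
    (hpar : ¬ ParityObstruction n) :
    ∃ T H : Finset ι, H ⊆ T ∧ (∀ i ∈ T, 2 ∣ n i) ∧ (∀ i ∈ H, 4 ∣ n i) ∧ 4 ∣ 2 * #T - #H ∧
      ∀ i, HasPrivateOddPrimes n i → i ∈ T := by
  classical
  push Not at hiso
  set U := univ.filter (HasPrivateOddPrimes n)
  set E := univ.filter fun i => Even (n i)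
  have hE : ∀ i ∈ E, 2 ∣ n i := fun i hi => even_iff_two_dvd.mp (mem_filter.mp hi).2
  have hU : ∀ i ∈ U, i ∈ E ∧ ∃ j ∈ E, j ≠ i := by
    intro i hi
    obtain ⟨j, hji, hgcd⟩ := hiso i
    obtain ⟨h2i, h2j⟩ := two_dvd_of_hasPrivateOddPrimes (mem_filter.mp hi).2 hji hgcd
    exact ⟨mem_filter.mpr ⟨mem_univ i, even_iff_two_dvd.mpr h2i⟩, j,
      mem_filter.mpr ⟨mem_univ j, even_iff_two_dvd.mpr h2j⟩, hji⟩
  have hcover : ∀ T, U ⊆ T → ∀ i, HasPrivateOddPrimes n i → i ∈ T := fun T hT i hi =>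
    hT (mem_filter.mpr ⟨mem_univ i, hi⟩)
  obtain ⟨c, hc⟩ | ⟨c, hc⟩ := Nat.even_or_odd #U
  · exact ⟨U, ∅, empty_subset _, fun i hi => hE i (hU i hi).1, by simp, by simp; omega,
      hcover U subset_rfl⟩
  by_cases hEU : E ⊆ U
  · have hEU' : E = U := hEU.antisymm fun i hi => (hU i hi).1
    obtain ⟨x, hx⟩ : U.Nonempty := card_pos.mp (by omega)
    obtain ⟨j, hj, hjx⟩ := (hU x hx).2
    obtain ⟨a, ha, b, hb, hab⟩ := one_lt_card.mp (one_lt_card_filter_padicValNat hpar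
      (fun i hi => (mem_filter.mp (hEU (mem_filter.mpr ⟨mem_univ i, hi⟩))).2)
      (show Odd #E from hEU' ▸ ⟨c, hc⟩) (one_lt_card.mpr ⟨j, hj, x, (hU x hx).1, hjx⟩))
    have hF : ∀ i ∈ univ.filter fun i => Even (n i) ∧ 1 < padicValNat 2 (n i),
        i ∈ E ∧ 4 ∣ n i := fun i hi =>
      ⟨mem_filter.mpr ⟨mem_univ i, (mem_filter.mp hi).2.1⟩,
        (pow_dvd_pow 2 (mem_filter.mp hi).2.2).trans pow_padicValNat_dvd⟩
    refine ⟨E, {a, b}, ?_, hE, ?_, ?_, hcover E hEU'.ge⟩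
    · simp [insert_subset_iff, (hF a ha).1, (hF b hb).1]
    · simp [(hF a ha).2, (hF b hb).2]
    · rw [card_pair hab, hEU', hc]
      omega
  · obtain ⟨x, hxE, hxU⟩ := not_subset.mp hEU
    refine ⟨insert x U, ∅, empty_subset _, fun i hi => ?_, by simp, ?_,
      hcover _ (subset_insert x U)⟩
    · obtain rfl | hi := mem_insert.mp hi
      exacts [hE i hxE, hE i (hU i hi).1]
    · rw [card_insert_of_notMem hxU, hc, card_empty]
      omega

theorem card_filter_dvd_and_dvd_ne_one [DecidableEq ι] (n : ι → ℕ) (p : ℕ) :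
    #(univ.filter fun i => p ∣ n i ∧ ∃ j, j ≠ i ∧ p ∣ n j) ≠ 1 := by
  intro h
  obtain ⟨i, hi⟩ := card_eq_one.mp h
  obtain ⟨hpi, j, hji, hpj⟩ := (mem_filter.mp (hi ▸ mem_singleton_self i)).2
  have hj : j ∈ univ.filter fun i => p ∣ n i ∧ ∃ j, j ≠ i ∧ p ∣ n j :=
    mem_filter.mpr ⟨mem_univ j, hpj, i, hji.symm, hpi⟩
  rw [hi, mem_singleton] at hj
  exact hji hj

theorem hasIntegralFractionSum_of_not_isolated_of_not_parityObstruction [DecidableEq ι]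
    (hn : ∀ i, n i ≠ 0) (hiso : ¬ ∃ i, ∀ i', i' ≠ i → Nat.gcd (n i) (n i') = 1)
    (hpar : ¬ ParityObstruction n) : HasIntegralFractionSum n := by
  obtain ⟨T, H, hHT, hT, hH, hcard, hTcover⟩ := exists_two_cover hiso hpar
  obtain ⟨c₂, hc₂, hc₂T⟩ := exists_isLocalSolution_four hHT hT hH hcard
  choose! c hc hcS using fun p (hp : 3 ≤ p) => exists_isLocalSolution_of_three_le hp
    (card_filter_dvd_and_dvd_ne_one n p) fun i hi => (mem_filter.mp hi).2.1
  have hP : ∀ p ∈ insert 2 (univ.biUnion fun i => (n i).primeFactors), p.Prime := by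
    simp only [mem_insert, mem_biUnion, mem_univ, true_and]
    rintro p (rfl | ⟨i, hi⟩)
    exacts [Nat.prime_two, Nat.prime_of_mem_primeFactors hi]
  refine hasIntegralFractionSum_of_isLocalSolution hn hP (fun p => if p = 2 then 2 else 1)
    (c := fun p => if p = 2 then c₂ else c p) (fun p hp => ?_) (fun i => ?_)
  · by_cases hp2 : p = 2
    · subst hp2
      simpa using hc₂
    · have := (hP p hp).two_le
      simpa [hp2] using hc p (by omega)
  · by_cases hpriv : HasPrivateOddPrimes n i
    · exact ⟨2, mem_insert_self _ _, by simpa using hc₂T i (hTcover i hpriv)⟩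
    obtain ⟨p, hp, hodd, hpi, j, hji, hpj⟩ : ∃ p, p.Prime ∧ Odd p ∧ p ∣ n i ∧
        ∃ j, j ≠ i ∧ p ∣ n j := by
      simpa [HasPrivateOddPrimes] using hpriv
    have hp2 : p ≠ 2 := by rintro rfl; exact Nat.not_odd_iff_even.mpr even_two hodd
    refine ⟨p, mem_insert_of_mem (mem_biUnion.mpr ⟨i, mem_univ i,
      Nat.mem_primeFactors.mpr ⟨hp, hpi, hn i⟩⟩), ?_⟩
    have := hp.two_le
    simpa [hp2] using hcS p (by omega) i (mem_filter.mpr ⟨mem_univ i, hpi, j, hji, hpj⟩)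

end Construction

theorem one_not_eigenvalue_iff_general {s : ℕ} (n : Fin s → ℕ) (hn : ∀ i, 2 ≤ n i) :
    ¬ (Chi n).IsRoot 1 ↔
      ((∃ i, ∀ i', i' ≠ i → Nat.gcd (n i) (n i') = 1) ∨
       (Even (Finset.univ.lcm n) ∧
        Odd (Finset.univ.filter (fun i => Even (n i))).card ∧
        3 ≤ (Finset.univ.filter (fun i => Even (n i))).card ∧
        (∀ i, Even (n i) → ∀ p : ℕ, p.Prime → Odd p → p ∣ n i →
          ∀ i', i' ≠ i → ¬ p ∣ n i') ∧
        (Finset.univ.filter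
            (fun i => Even (n i) ∧ 1 < padicValNat 2 (n i))).card ≤ 1)) := by
  have hn0 : ∀ i, n i ≠ 0 := fun i => (Nat.two_pos.trans_le (hn i)).ne'
  rw [Chi_isRoot_one_iff hn0]
  refine ⟨fun h => ?_, ?_⟩
  · by_contra hcon
    obtain ⟨hiso, hpar⟩ := not_or.mp hcon
    exact h (hasIntegralFractionSum_of_not_isolated_of_not_parityObstruction hn0 hiso hpar)
  · rintro (hiso | hpar)
    exacts [not_hasIntegralFractionSum_of_isolated hiso,
      not_hasIntegralFractionSum_of_parityObstruction hpar]

theorem one_not_eigenvalue_iff {s : ℕ} (hs : 0 < s) (n : Fin s → ℕ) (hn : ∀ i, 2 ≤ n i)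
    (h2 : (Finset.univ.filter (fun i => n i = 2)).card ≤ 1) :
    ¬ (Chi n).IsRoot 1 ↔
      ((∃ i, ∀ i', i' ≠ i → Nat.gcd (n i) (n i') = 1) ∨
       (Even (Finset.univ.lcm n) ∧
        Odd (Finset.univ.filter (fun i => Even (n i))).card ∧
        3 ≤ (Finset.univ.filter (fun i => Even (n i))).card ∧
        (∀ i, Even (n i) → ∀ p : ℕ, p.Prime → Odd p → p ∣ n i →
          ∀ i', i' ≠ i → ¬ p ∣ n i') ∧
        (Finset.univ.filter
            (fun i => Even (n i) ∧ 1 < padicValNat 2 (n i))).card ≤ 1)) :=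
  one_not_eigenvalue_iff_general n hn
end
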